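/- arXiv:2601.22481 — 6 statements merged into one kernel-verified Lean document; each statement's English description precedes it below -/
import Mathlib

section
/- Optimal partition recursion: for every integer s ≥ 2, F(s) = min over integers 1 ≤ r < s of { F(r) + C(r, s−1) + β }; that is, the optimal penalized segmentation of the first s−1 data points is obtained by optimizing over the location r of the last changepoint and adding the cost of the final segment plus one changepoint penalty. -/
/-!
Every changepoint vector prior to `s` with at least one changepoint splits at its last
changepoint `r` into a changepoint vector prior to `r` and the final segment `[r, s - 1]`;
conversely any vector prior to `r < s` extends by the segment `[r, s - 1]`. So the set of
penalized costs prior to `s` is `{C(1, s-1)} ∪ ⋃_{r<s} (costs prior to r) + C(r, s-1) + β`,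
which is finite by strong induction, and taking minima gives the recursion (the vector with no
changepoint corresponds to `r = 1` through the convention `F(1) = -β`).
-/

/-- The optimal-partition objective: `opF C β s` is the minimum, over all changepoint
vectors `1 = τ₀ < τ₁ < ⋯ < τ_m < τ_{m+1} = s`, of the total segment cost
`∑_{i=1}^{m+1} C (τ_{i-1}) (τ_i - 1)` plus a penalty `β` per changepoint,
with the convention `opF C β 1 = -β`. -/
noncomputable def opF (C : ℕ → ℕ → ℝ) (β : ℝ) (s : ℕ) : ℝ :=
  if s = 1 then -β
  else sInf {v : ℝ | ∃ (m : ℕ) (τ : ℕ → ℕ),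
    τ 0 = 1 ∧ τ (m + 1) = s ∧ (∀ i ≤ m, τ i < τ (i + 1)) ∧
    v = (∑ i ∈ Finset.range (m + 1), C (τ i) (τ (i + 1) - 1)) + (m : ℝ) * β}

def penalizedCostSet (C : ℕ → ℕ → ℝ) (β : ℝ) (s : ℕ) : Set ℝ :=
  {v : ℝ | ∃ (m : ℕ) (τ : ℕ → ℕ),
    τ 0 = 1 ∧ τ (m + 1) = s ∧ (∀ i ≤ m, τ i < τ (i + 1)) ∧
    v = (∑ i ∈ Finset.range (m + 1), C (τ i) (τ (i + 1) - 1)) + (m : ℝ) * β}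

lemma add_le_apply_of_lt_succ {τ : ℕ → ℕ} {m : ℕ} (h : ∀ i ≤ m, τ i < τ (i + 1)) :
    ∀ j ≤ m + 1, τ 0 + j ≤ τ j
  | 0, _ => le_rfl
  | j + 1, hj => by
    have := add_le_apply_of_lt_succ h j (by omega)
    have := h j (by omega)
    omega

section

variable {C : ℕ → ℕ → ℝ} {β : ℝ} {r s : ℕ} {v a : ℝ}

lemma opF_one : opF C β 1 = -β := if_pos rfl

lemma opF_eq_sInf (hs : s ≠ 1) : opF C β s = sInf (penalizedCostSet C β s) :=
  if_neg hs

lemma two_le_of_mem_penalizedCostSet (hv : v ∈ penalizedCostSet C β s) : 2 ≤ s := by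
  obtain ⟨m, τ, h0, h1, hlt, -⟩ := hv
  have := add_le_apply_of_lt_succ hlt (m + 1) le_rfl
  omega

lemma cost_one_mem_penalizedCostSet (hs : 2 ≤ s) : C 1 (s - 1) ∈ penalizedCostSet C β s := by
  refine ⟨0, fun i => if i = 0 then 1 else s, rfl, rfl, ?_, by simp⟩
  intro i hi
  obtain rfl : i = 0 := Nat.le_zero.mp hi
  exact hs

lemma add_cost_mem_penalizedCostSet (hrs : r < s) (ha : a ∈ penalizedCostSet C β r) :
    a + C r (s - 1) + β ∈ penalizedCostSet C β s := by
  obtain ⟨m, τ, h0, h1, hlt, rfl⟩ := ha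
  have hτ : ∀ i ≤ m + 1, Function.update τ (m + 2) s i = τ i := fun i hi =>
    Function.update_of_ne (by omega) _ _
  refine ⟨m + 1, Function.update τ (m + 2) s, by rw [hτ 0 (by omega), h0],
    Function.update_self _ _ _, fun i hi => ?_, ?_⟩
  · rw [hτ i (by omega)]
    rcases Nat.lt_or_ge i (m + 1) with hi' | hi'
    · rw [hτ (i + 1) hi']
      exact hlt i (by omega)
    · obtain rfl : i = m + 1 := by omega
      rw [Function.update_self, h1]
      exact hrs
  · have hprefix : ∑ i ∈ Finset.range (m + 1),
        C (Function.update τ (m + 2) s i) (Function.update τ (m + 2) s (i + 1) - 1) =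
        ∑ i ∈ Finset.range (m + 1), C (τ i) (τ (i + 1) - 1) :=
      Finset.sum_congr rfl fun i hi => by
        rw [Finset.mem_range] at hi
        rw [hτ i (by omega), hτ (i + 1) (by omega)]
    rw [Finset.sum_range_succ _ (m + 1), hprefix, hτ (m + 1) le_rfl, Function.update_self, h1]
    push_cast
    ring

lemma penalizedCostSet_subset :
    penalizedCostSet C β s ⊆
      insert (C 1 (s - 1)) (⋃ r ∈ Set.Iio s, (· + C r (s - 1) + β) '' penalizedCostSet C β r) := by
  rintro v ⟨_ | k, τ, h0, h1, hlt, rfl⟩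
  · left
    simp [h0, h1]
  · right
    have hlast : τ (k + 1) < s := h1 ▸ hlt (k + 1) le_rfl
    refine Set.mem_biUnion hlast ⟨_, ⟨k, τ, h0, rfl, fun i hi => hlt i (by omega), rfl⟩, ?_⟩
    rw [Finset.sum_range_succ _ (k + 1), h1]
    push_cast
    ring

lemma penalizedCostSet_finite (s : ℕ) : (penalizedCostSet C β s).Finite := by
  induction s using Nat.strong_induction_on with
  | _ s ih =>
    exact (((Set.finite_Iio s).biUnion fun r hr => (ih r hr).image _).insert _).subset
      penalizedCostSet_subset

lemma opF_mem_penalizedCostSet (hs : 2 ≤ s) : opF C β s ∈ penalizedCostSet C β s := by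
  rw [opF_eq_sInf (by omega)]
  exact Set.Nonempty.csInf_mem ⟨_, cost_one_mem_penalizedCostSet hs⟩ (penalizedCostSet_finite s)

lemma opF_le_of_mem_penalizedCostSet (hv : v ∈ penalizedCostSet C β s) : opF C β s ≤ v := by
  rw [opF_eq_sInf (by have := two_le_of_mem_penalizedCostSet hv; omega)]
  exact csInf_le (penalizedCostSet_finite s).bddBelow hv

lemma opF_add_cost_mem_penalizedCostSet (hr : 1 ≤ r) (hrs : r < s) :
    opF C β r + C r (s - 1) + β ∈ penalizedCostSet C β s := by
  rcases hr.eq_or_lt with rfl | hr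
  · rw [opF_one, neg_add_cancel_comm]
    exact cost_one_mem_penalizedCostSet hrs
  · exact add_cost_mem_penalizedCostSet hrs (opF_mem_penalizedCostSet hr)

lemma exists_opF_add_cost_le (hv : v ∈ penalizedCostSet C β s) :
    ∃ r, 1 ≤ r ∧ r < s ∧ opF C β r + C r (s - 1) + β ≤ v := by
  rcases penalizedCostSet_subset hv with rfl | hv'
  · refine ⟨1, le_rfl, two_le_of_mem_penalizedCostSet hv, ?_⟩
    rw [opF_one, neg_add_cancel_comm]
  · obtain ⟨r, hrs, a, ha, rfl⟩ := Set.mem_iUnion₂.mp hv'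
    have := two_le_of_mem_penalizedCostSet ha
    exact ⟨r, by omega, hrs, by linarith [opF_le_of_mem_penalizedCostSet ha]⟩

end

/-- Optimal partition recursion: for every `s ≥ 2`,
`F(s) = min_{1 ≤ r < s} { F(r) + C(r, s-1) + β }`. -/
theorem optimal_partition_recursion (C : ℕ → ℕ → ℝ) (β : ℝ) (s : ℕ) (hs : 2 ≤ s) :
    opF C β s =
      sInf {v : ℝ | ∃ r : ℕ, 1 ≤ r ∧ r < s ∧ v = opF C β r + C r (s - 1) + β} := by
  set B := {v : ℝ | ∃ r : ℕ, 1 ≤ r ∧ r < s ∧ v = opF C β r + C r (s - 1) + β}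
  have hB : B.Finite := ((Set.finite_Ico 1 s).image _).subset
    fun _ ⟨r, hr, hrs, hv⟩ => ⟨r, ⟨hr, hrs⟩, hv.symm⟩
  rw [opF_eq_sInf (by omega)]
  apply le_antisymm
  · exact csInf_le_csInf (penalizedCostSet_finite s).bddBelow ⟨_, 1, le_rfl, hs, rfl⟩
      fun _ ⟨r, hr, hrs, hv⟩ => hv ▸ opF_add_cost_mem_penalizedCostSet hr hrs
  · refine le_csInf ⟨_, opF_mem_penalizedCostSet hs⟩ fun v hv => ?_
    obtain ⟨r, hr, hrs, hle⟩ := exists_opF_add_cost_le hv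
    exact (csInf_le hB.bddBelow ⟨r, hr, hrs, rfl⟩).trans hle
end

section
/- PELT pruning criterion: if integers 1 ≤ r < s satisfy F(r) + C(r, s−1) + K ≥ F(s), then for every integer t > s one has F(r) + C(r, t−1) + β ≥ F(s) + C(s, t−1) + β; consequently r never yields a strictly smaller candidate value than s as the last changepoint prior to any future time t, and may be discarded from the optimal-partition recursion without loss of optimality. -/
/-- PELT pruning criterion: assuming the splitting inequality
`C(r, s-1) + C(s, t-1) + K ≤ C(r, t-1)` for all `1 ≤ r < s < t`, if
`F(r) + C(r, s-1) + K ≥ F(s)`, then for every `t > s`,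
`F(r) + C(r, t-1) + β ≥ F(s) + C(s, t-1) + β`, so `r` never beats `s` as the
last changepoint prior to any future time `t` and may be discarded. -/
theorem pelt_pruning_criterion (C : ℕ → ℕ → ℝ) (β K : ℝ)
    (hC : ∀ r s t : ℕ, 1 ≤ r → r < s → s < t →
      C r (s - 1) + C s (t - 1) + K ≤ C r (t - 1))
    (r s : ℕ) (hr : 1 ≤ r) (hrs : r < s)
    (hprune : opF C β s ≤ opF C β r + C r (s - 1) + K) :
    ∀ t : ℕ, s < t →
      opF C β s + C s (t - 1) + β ≤ opF C β r + C r (t - 1) + β := by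
  intro t hst
  calc opF C β s + C s (t - 1) + β
      ≤ opF C β r + (C r (s - 1) + C s (t - 1) + K) + β := by linarith
    _ ≤ opF C β r + C r (t - 1) + β := by gcongr; exact hC r s t hr hrs hst
end

section
/- CPOP recursion: for every integer t ≥ 1 and every φ ∈ ℝ, f^t(φ) = inf over integers 0 ≤ s < t and over φ' ∈ ℝ of { f^s(φ') + C(s, t, φ', φ) + h(t−s) + β }; that is, the minimum penalized cost of fitting a continuous piecewise-linear function to the first t data points with fitted value φ at time t is obtained by optimizing over the last changepoint location s and its fitted value φ'. -/
/-- The continuous piecewise-linear segment cost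
`C(s, t, φ', φ) = (1/σ²) ∑_{i=s+1}^{t} (y_i − φ' − ((φ − φ')/(t − s))·(i − s))²`. -/
noncomputable def segCost (σ : ℝ) (y : ℕ → ℝ) (s t : ℕ) (φ' φ : ℝ) : ℝ :=
  (1 / σ ^ 2) * ∑ i ∈ Finset.Icc (s + 1) t,
    (y i - φ' - ((φ - φ') / ((t : ℝ) - (s : ℝ))) * ((i : ℝ) - (s : ℝ))) ^ 2

/-- `cpopF σ y h β t φ` is the minimum penalized cost of fitting a continuous
piecewise-linear function to the first `t` data points with fitted value `φ` at
time `t`: the infimum over `k ≥ 0` changepoints `0 = τ₀ < τ₁ < ⋯ < τ_k < t` with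
fitted values `Φ 0, …, Φ k` of the total segment costs, segment-length penalties
`h`, and changepoint penalty `β(k+1)`; with `cpopF σ y h β 0 φ = 0`. -/
noncomputable def cpopF (σ : ℝ) (y : ℕ → ℝ) (h : ℕ → ℝ) (β : ℝ) (t : ℕ) (φ : ℝ) : ℝ :=
  if t = 0 then 0
  else sInf {v : ℝ | ∃ (k : ℕ) (τ : ℕ → ℕ) (Φ : ℕ → ℝ),
    τ 0 = 0 ∧ (∀ i < k, τ i < τ (i + 1)) ∧ τ k < t ∧
    v = (∑ i ∈ Finset.range k,
          (segCost σ y (τ i) (τ (i + 1)) (Φ i) (Φ (i + 1)) + h (τ (i + 1) - τ i)))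
        + segCost σ y (τ k) t (Φ k) φ + h (t - τ k) + β * ((k : ℝ) + 1)}

/-!
Cut a segmentation of `1, …, t` at its last changepoint `s`: what remains on the left is
a segmentation of `1, …, s` ending at the fitted value `φ'` of the last piece, so the set of
penalized costs at `t` is the union, over `s < t` and `φ'`, of the translates of the cost sets at
`s` by the cost of one more piece. Taking infima commutes with such unions of translates.
-/

open Set Function

theorem csInf_biUnion_image_add {ι α : Type*} [ConditionallyCompleteLattice α] [AddCommGroup α]
    [IsOrderedAddMonoid α] {I : Set ι} {A : ι → Set α} {c : ι → α}
    (hA : ∀ i ∈ I, (A i).Nonempty) (hbdd : BddBelow (⋃ i ∈ I, (· + c i) '' A i)) :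
    sInf (⋃ i ∈ I, (· + c i) '' A i) = sInf ((fun i => sInf (A i) + c i) '' I) := by
  rcases I.eq_empty_or_nonempty with rfl | hI
  · simp
  have ⟨i₀, hi₀⟩ := hI
  have hmem : ∀ i ∈ I, ∀ a ∈ A i, a + c i ∈ ⋃ i ∈ I, (· + c i) '' A i :=
    fun i hi a ha => mem_biUnion hi (mem_image_of_mem _ ha)
  have hA_bdd : ∀ i ∈ I, BddBelow (A i) := by
    obtain ⟨b, hb⟩ := hbdd
    exact fun i hi => ⟨b - c i, fun a ha => sub_le_iff_le_add.2 (hb (hmem i hi a ha))⟩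
  have hle : ∀ i ∈ I, sInf (⋃ i ∈ I, (· + c i) '' A i) ≤ sInf (A i) + c i := fun i hi =>
    sub_le_iff_le_add.1 <| le_csInf (hA i hi) fun a ha =>
      sub_le_iff_le_add.2 (csInf_le hbdd (hmem i hi a ha))
  apply le_antisymm
  · exact le_csInf (hI.image _) (Set.forall_mem_image.2 hle)
  · refine le_csInf ⟨_, hmem i₀ hi₀ _ (hA i₀ hi₀).some_mem⟩ ?_
    simp only [mem_iUnion, mem_image]
    rintro _ ⟨i, hi, a, ha, rfl⟩
    exact (csInf_le ⟨_, Set.forall_mem_image.2 hle⟩ (mem_image_of_mem _ hi)).trans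
      (add_le_add_left (csInf_le (hA_bdd i hi) ha) _)

theorem segCost_nonneg (σ : ℝ) (y : ℕ → ℝ) (s t : ℕ) (φ' φ : ℝ) : 0 ≤ segCost σ y s t φ' φ := by
  unfold segCost
  positivity

section Segmentation

variable (σ : ℝ) (y : ℕ → ℝ) (h : ℕ → ℝ) (β : ℝ)

noncomputable def penalizedSegCost (s t : ℕ) (φ' φ : ℝ) : ℝ :=
  segCost σ y s t φ' φ + h (t - s) + β

noncomputable def segmentationCost (k : ℕ) (τ : ℕ → ℕ) (Φ : ℕ → ℝ) : ℝ :=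
  ∑ i ∈ Finset.range k, penalizedSegCost σ y h β (τ i) (τ (i + 1)) (Φ i) (Φ (i + 1))

/-- Unlike in `cpopF`, the last index `τ k` is the end point `t` itself, so that `t = 0` is
allowed (with the empty segmentation, of cost `0`). -/
def segmentationCosts (t : ℕ) (φ : ℝ) : Set ℝ :=
  {v | ∃ (k : ℕ) (τ : ℕ → ℕ) (Φ : ℕ → ℝ), τ 0 = 0 ∧ (∀ i < k, τ i < τ (i + 1)) ∧
    τ k = t ∧ Φ k = φ ∧ v = segmentationCost σ y h β k τ Φ}

theorem segmentationCost_add_penalizedSegCost (k : ℕ) (τ : ℕ → ℕ) (Φ : ℕ → ℝ) (t : ℕ) (φ : ℝ) :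
    segmentationCost σ y h β k τ Φ + penalizedSegCost σ y h β (τ k) t (Φ k) φ =
      (∑ i ∈ Finset.range k,
          (segCost σ y (τ i) (τ (i + 1)) (Φ i) (Φ (i + 1)) + h (τ (i + 1) - τ i)))
        + segCost σ y (τ k) t (Φ k) φ + h (t - τ k) + β * ((k : ℝ) + 1) := by
  simp only [segmentationCost, penalizedSegCost, Finset.sum_add_distrib, Finset.sum_const,
    Finset.card_range, nsmul_eq_mul]
  ring

theorem segmentationCost_update_succ (k : ℕ) (τ : ℕ → ℕ) (Φ : ℕ → ℝ) (t : ℕ) (φ : ℝ) :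
    segmentationCost σ y h β (k + 1) (update τ (k + 1) t) (update Φ (k + 1) φ) =
      segmentationCost σ y h β k τ Φ + penalizedSegCost σ y h β (τ k) t (Φ k) φ := by
  rw [segmentationCost, Finset.sum_range_succ]
  congr 1
  · refine Finset.sum_congr rfl fun i hi => ?_
    have hi : i < k := Finset.mem_range.1 hi
    rw [update_of_ne (by omega), update_of_ne (by omega), update_of_ne (by omega),
      update_of_ne (by omega)]
  · simp

theorem segmentationCosts_zero (φ : ℝ) : segmentationCosts σ y h β 0 φ = {0} := by
  ext v
  constructor
  · rintro ⟨k, τ, Φ, -, hτ, hτk, -, rfl⟩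
    have hk : k ≤ τ k := (strictMonoOn_Iic_of_lt_succ (by simpa using hτ)).Iic_id_le k le_rfl
    obtain rfl : k = 0 := by omega
    rfl
  · rintro rfl
    exact ⟨0, fun _ => 0, fun _ => φ, rfl, by simp, rfl, rfl, rfl⟩

theorem segmentationCosts_nonempty (t : ℕ) (φ : ℝ) : (segmentationCosts σ y h β t φ).Nonempty := by
  rcases Nat.eq_zero_or_pos t with rfl | ht
  · simp [segmentationCosts_zero]
  · exact ⟨_, 1, (· * t), fun _ => φ, by simp, by simpa using ht, by simp, rfl, rfl⟩

theorem bddBelow_segmentationCosts (t : ℕ) (φ : ℝ) : BddBelow (segmentationCosts σ y h β t φ) := by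
  obtain ⟨L, hL⟩ := ((Set.finite_Icc 1 t).image h).bddBelow
  set m := min (L + β) 0
  refine ⟨t * m, ?_⟩
  rintro _ ⟨k, τ, Φ, -, hτ, rfl, -, rfl⟩
  have hmono := strictMonoOn_Iic_of_lt_succ (ψ := τ) (by simpa using hτ)
  have hpiece : ∀ i ∈ Finset.range k,
      m ≤ penalizedSegCost σ y h β (τ i) (τ (i + 1)) (Φ i) (Φ (i + 1)) := by
    intro i hi
    have hi : i < k := Finset.mem_range.1 hi
    have hlast : τ (i + 1) ≤ τ k :=
      hmono.monotoneOn (mem_Iic.2 (by omega)) (mem_Iic.2 le_rfl) (by omega)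
    have hlen : h (τ (i + 1) - τ i) ∈ h '' Icc 1 (τ k) :=
      mem_image_of_mem _ ⟨by have := hτ i hi; omega, by omega⟩
    have := hL hlen
    have := segCost_nonneg σ y (τ i) (τ (i + 1)) (Φ i) (Φ (i + 1))
    simp only [penalizedSegCost]
    linarith [min_le_left (L + β) 0]
  have hk : (k : ℝ) ≤ τ k := by exact_mod_cast hmono.Iic_id_le k le_rfl
  calc (τ k : ℝ) * m ≤ k * m := mul_le_mul_of_nonpos_right hk (min_le_right _ _)
    _ = ∑ i ∈ Finset.range k, m := by simp
    _ ≤ segmentationCost σ y h β k τ Φ := Finset.sum_le_sum hpiece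

theorem segmentationCosts_eq_biUnion {t : ℕ} (ht : t ≠ 0) (φ : ℝ) :
    segmentationCosts σ y h β t φ = ⋃ p ∈ {p : ℕ × ℝ | p.1 < t},
      (· + penalizedSegCost σ y h β p.1 t p.2 φ) '' segmentationCosts σ y h β p.1 p.2 := by
  ext v
  simp only [mem_iUnion, mem_image, mem_ofPred_eq, segmentationCosts, Prod.exists, exists_prop]
  constructor
  · rintro ⟨k, τ, Φ, h0, hτ, rfl, rfl, rfl⟩
    obtain ⟨k, rfl⟩ := Nat.exists_eq_add_one_of_ne_zero (show k ≠ 0 by rintro rfl; exact ht h0)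
    exact ⟨τ k, Φ k, hτ k k.lt_add_one, _,
      ⟨k, τ, Φ, h0, fun i hi => hτ i (by omega), rfl, rfl, rfl⟩,
      (Finset.sum_range_succ _ _).symm⟩
  · rintro ⟨s, φ', hs, _, ⟨k, τ, Φ, h0, hτ, rfl, rfl, rfl⟩, rfl⟩
    refine ⟨k + 1, update τ (k + 1) t, update Φ (k + 1) φ, by simp [h0], fun i hi => ?_,
      by simp, by simp, (segmentationCost_update_succ σ y h β k τ Φ t φ).symm⟩
    rcases Nat.lt_succ_iff_lt_or_eq.1 hi with hi | rfl
    · rw [update_of_ne (by omega), update_of_ne (by omega)]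
      exact hτ i hi
    · simpa using hs

theorem cpopF_eq_sInf_biUnion {t : ℕ} (ht : t ≠ 0) (φ : ℝ) :
    cpopF σ y h β t φ = sInf (⋃ p ∈ {p : ℕ × ℝ | p.1 < t},
      (· + penalizedSegCost σ y h β p.1 t p.2 φ) '' segmentationCosts σ y h β p.1 p.2) := by
  rw [cpopF, if_neg ht]
  congr 1
  ext v
  simp only [mem_iUnion, mem_image, mem_ofPred_eq, segmentationCosts, Prod.exists, exists_prop]
  constructor
  · rintro ⟨k, τ, Φ, h0, hτ, hlt, rfl⟩
    exact ⟨τ k, Φ k, hlt, _, ⟨k, τ, Φ, h0, hτ, rfl, rfl, rfl⟩,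
      segmentationCost_add_penalizedSegCost σ y h β k τ Φ t φ⟩
  · rintro ⟨s, φ', hs, _, ⟨k, τ, Φ, h0, hτ, rfl, rfl, rfl⟩, rfl⟩
    exact ⟨k, τ, Φ, h0, hτ, hs, segmentationCost_add_penalizedSegCost σ y h β k τ Φ t φ⟩

theorem cpopF_eq_sInf_segmentationCosts (t : ℕ) (φ : ℝ) :
    cpopF σ y h β t φ = sInf (segmentationCosts σ y h β t φ) := by
  rcases eq_or_ne t 0 with rfl | ht
  · simp [cpopF, segmentationCosts_zero]
  · rw [cpopF_eq_sInf_biUnion σ y h β ht, segmentationCosts_eq_biUnion σ y h β ht]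

end Segmentation

theorem cpop_recursion_general (σ : ℝ) (y : ℕ → ℝ) (h : ℕ → ℝ) (β : ℝ)
    (t : ℕ) (ht : 1 ≤ t) (φ : ℝ) :
    cpopF σ y h β t φ =
      sInf {v : ℝ | ∃ (s : ℕ) (φ' : ℝ), s < t ∧
        v = cpopF σ y h β s φ' + segCost σ y s t φ' φ + h (t - s) + β} := by
  have ht : t ≠ 0 := Nat.one_le_iff_ne_zero.1 ht
  have hbdd := (bddBelow_segmentationCosts σ y h β t φ).mono
    (segmentationCosts_eq_biUnion σ y h β ht φ).ge
  rw [cpopF_eq_sInf_biUnion σ y h β ht,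
    csInf_biUnion_image_add (fun p _ => segmentationCosts_nonempty σ y h β _ _) hbdd]
  congr 1
  ext v
  simp [← cpopF_eq_sInf_segmentationCosts, penalizedSegCost, add_assoc, eq_comm]

/-- CPOP recursion: for every `t ≥ 1` and every `φ ∈ ℝ`,
`f^t(φ) = inf_{0 ≤ s < t, φ' ∈ ℝ} { f^s(φ') + C(s, t, φ', φ) + h(t−s) + β }`. -/
theorem cpop_recursion (σ : ℝ) (hσ : 0 < σ) (y : ℕ → ℝ) (h : ℕ → ℝ) (β : ℝ)
    (t : ℕ) (ht : 1 ≤ t) (φ : ℝ) :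
    cpopF σ y h β t φ =
      sInf {v : ℝ | ∃ (s : ℕ) (φ' : ℝ), s < t ∧
        v = cpopF σ y h β s φ' + segCost σ y s t φ' φ + h (t - s) + β} :=
  cpop_recursion_general σ y h β t ht φ
end

section
/- Pruned segment neighbourhood recursive structure: for every integer s ≥ 2 and every μ ∈ ℝ, G^s(μ) = min{ G^{s−1}(μ) + γ(y_{s−1}, μ), F(s) }; that is, the pointwise minimum over candidate last changepoints updates by either extending the current final segment by one data point or starting a new final segment at s. -/
/-- `psnG y γ F s r μ` is the cost `G^s(r, μ) = F(r) + ∑_{i=r}^{s-1} γ(y_i, μ)` of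
segmentations whose final segment starts at `r` and is parameterized by `μ`,
with the convention `G^s(s, μ) = F(s)`. -/
noncomputable def psnG (y : ℕ → ℝ) (γ : ℝ → ℝ → ℝ) (F : ℕ → ℝ)
    (s r : ℕ) (μ : ℝ) : ℝ :=
  if r = s then F s else F r + ∑ i ∈ Finset.Ico r s, γ (y i) μ

/-- `psnGmin y γ F s μ = G^s(μ)`, the minimum of `G^s(r, μ)` over `1 ≤ r ≤ s`. -/
noncomputable def psnGmin (y : ℕ → ℝ) (γ : ℝ → ℝ → ℝ) (F : ℕ → ℝ)
    (s : ℕ) (μ : ℝ) : ℝ :=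
  sInf {v : ℝ | ∃ r : ℕ, 1 ≤ r ∧ r ≤ s ∧ v = psnG y γ F s r μ}

/-- Pruned segment neighbourhood recursive structure: for every `s ≥ 2` and `μ ∈ ℝ`,
`G^s(μ) = min { G^{s-1}(μ) + γ(y_{s-1}, μ), F(s) }`. -/
theorem psn_recursive_structure (y : ℕ → ℝ) (γ : ℝ → ℝ → ℝ) (F : ℕ → ℝ)
    (s : ℕ) (hs : 2 ≤ s) (μ : ℝ) :
    psnGmin y γ F s μ =
      min (psnGmin y γ F (s - 1) μ + γ (y (s - 1)) μ) (F s) := by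
  obtain ⟨m, rfl⟩ : ∃ m, s = m + 1 := ⟨s - 1, by omega⟩
  have hm : 1 ≤ m := by omega
  simp only [Nat.add_sub_cancel]
  set c := γ (y m) μ with hc
  set B : Set ℝ := {v : ℝ | ∃ r : ℕ, 1 ≤ r ∧ r ≤ m ∧ v = psnG y γ F m r μ} with hB
  have key : ∀ r : ℕ, 1 ≤ r → r ≤ m →
      psnG y γ F (m + 1) r μ = psnG y γ F m r μ + c := by
    intro r h1 h2
    have hrne : r ≠ m + 1 := by omega
    unfold psnG
    rw [if_neg hrne]
    by_cases h : r = m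
    · subst h
      rw [if_pos rfl, Finset.sum_Ico_eq_sum_range]
      simp [hc]
    · rw [if_neg h, Finset.sum_Ico_succ_top (by omega : r ≤ m)]
      ring
  have hAB : {v : ℝ | ∃ r : ℕ, 1 ≤ r ∧ r ≤ m + 1 ∧ v = psnG y γ F (m + 1) r μ}
      = (fun v => v + c) '' B ∪ {F (m + 1)} := by
    ext v
    constructor
    · rintro ⟨r, h1, h2, rfl⟩
      by_cases h : r = m + 1
      · right; subst h; simp [psnG]
      · left
        exact ⟨psnG y γ F m r μ, ⟨r, h1, by omega, rfl⟩, (key r h1 (by omega)).symm⟩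
    · rintro (⟨w, ⟨r, h1, h2, rfl⟩, rfl⟩ | rfl)
      · exact ⟨r, h1, by omega, (key r h1 h2).symm⟩
      · exact ⟨m + 1, by omega, le_refl _, by simp [psnG]⟩
  have hBne : B.Nonempty := ⟨psnG y γ F m m μ, m, hm, le_refl _, rfl⟩
  have hBfin : B.Finite := by
    apply Set.Finite.subset ((Set.finite_Icc 1 m).image (fun r => psnG y γ F m r μ))
    rintro v ⟨r, h1, h2, rfl⟩
    exact ⟨r, ⟨h1, h2⟩, rfl⟩
  have hBbdd : BddBelow B := hBfin.bddBelow
  have himg : sInf ((fun v => v + c) '' B) = sInf B + c := by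
    have hleast : IsLeast B (sInf B) := ⟨hBne.csInf_mem hBfin, fun x hx => csInf_le hBbdd hx⟩
    have h2 : IsLeast ((fun v => v + c) '' B) (sInf B + c) := by
      refine ⟨⟨sInf B, hleast.1, rfl⟩, ?_⟩
      rintro x ⟨w, hw, rfl⟩
      exact add_le_add (hleast.2 hw) le_rfl
    exact h2.csInf_eq
  rw [psnGmin, psnGmin, hAB,
    csInf_union ((hBfin.image _).bddBelow) (hBne.image _) bddBelow_singleton
      (Set.singleton_nonempty _), himg, csInf_singleton]
end

section
/- Pruned segment neighbourhood pruning criterion: if integers 1 ≤ r < s are such that G^s(r, μ) > G^s(μ) for every μ ∈ ℝ, then for every integer t > s and every μ ∈ ℝ one has G^t(r, μ) > G^t(μ); consequently the candidate last-changepoint index r can never again be optimal for any fixed segment parameter μ at any later time t, and may be permanently discarded. -/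
/-!
Moving from time `s` to a later time `t` adds the same amount `∑_{i=s}^{t-1} γ(y_i, μ)` to
`G^s(r, μ)` for every candidate `r ≤ s`, so the ordering of the candidates at a fixed `μ` is
preserved. If `r` is beaten at time `s` by the minimiser `r'`, it is still beaten by `r'` at
time `t`, hence by the minimum `G^t(μ)`.
-/

section

variable (y : ℕ → ℝ) (γ : ℝ → ℝ → ℝ) (F : ℕ → ℝ)

theorem psnG_eq_add_sum_Ico {r s t : ℕ} (hrs : r ≤ s) (hst : s ≤ t) (μ : ℝ) :
    psnG y γ F t r μ = psnG y γ F s r μ + ∑ i ∈ Finset.Ico s t, γ (y i) μ := by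
  rcases hst.eq_or_lt with rfl | hst
  · simp
  rcases hrs.eq_or_lt with rfl | hrs
  · simp [psnG, hst.ne]
  · simp only [psnG, hrs.ne, (hrs.trans hst).ne, if_false]
    rw [← Finset.sum_Ico_consecutive _ hrs.le hst.le, add_assoc]

theorem psnG_lt_psnG_of_le {r r' s t : ℕ} (hr : r ≤ s) (hr' : r' ≤ s) (hst : s ≤ t)
    {μ : ℝ} (h : psnG y γ F s r' μ < psnG y γ F s r μ) :
    psnG y γ F t r' μ < psnG y γ F t r μ := by
  rw [psnG_eq_add_sum_Ico y γ F hr hst, psnG_eq_add_sum_Ico y γ F hr' hst]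
  exact add_lt_add_left h _

theorem finite_setOf_psnG (s : ℕ) (μ : ℝ) :
    {v : ℝ | ∃ r : ℕ, 1 ≤ r ∧ r ≤ s ∧ v = psnG y γ F s r μ}.Finite :=
  ((Set.finite_Icc 1 s).image fun r => psnG y γ F s r μ).subset <| by
    rintro _ ⟨r, h1, h2, rfl⟩
    exact ⟨r, ⟨h1, h2⟩, rfl⟩

theorem psnGmin_le_psnG {r s : ℕ} (h1 : 1 ≤ r) (h2 : r ≤ s) (μ : ℝ) :
    psnGmin y γ F s μ ≤ psnG y γ F s r μ :=
  csInf_le (finite_setOf_psnG y γ F s μ).bddBelow ⟨r, h1, h2, rfl⟩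

theorem exists_psnG_eq_psnGmin {s : ℕ} (h1s : 1 ≤ s) (μ : ℝ) :
    ∃ r, 1 ≤ r ∧ r ≤ s ∧ psnGmin y γ F s μ = psnG y γ F s r μ :=
  Set.Nonempty.csInf_mem (by exact ⟨_, s, h1s, le_rfl, rfl⟩) (finite_setOf_psnG y γ F s μ)

end

theorem psn_pruning_criterion_general (y : ℕ → ℝ) (γ : ℝ → ℝ → ℝ) (F : ℕ → ℝ)
    (r s : ℕ) (hrs : r < s)
    (h : ∀ μ : ℝ, psnGmin y γ F s μ < psnG y γ F s r μ) :
    ∀ t : ℕ, s < t → ∀ μ : ℝ, psnGmin y γ F t μ < psnG y γ F t r μ := by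
  intro t hst μ
  obtain ⟨r', hr'1, hr's, hmin⟩ := exists_psnG_eq_psnGmin y γ F (Nat.one_le_of_lt hrs) μ
  calc psnGmin y γ F t μ
      ≤ psnG y γ F t r' μ := psnGmin_le_psnG y γ F hr'1 (hr's.trans hst.le) μ
    _ < psnG y γ F t r μ := psnG_lt_psnG_of_le y γ F hrs.le hr's hst.le (hmin ▸ h μ)

/-- Pruned segment neighbourhood pruning criterion: if `1 ≤ r < s` and
`G^s(r, μ) > G^s(μ)` for every `μ`, then for every `t > s` and every `μ`,
`G^t(r, μ) > G^t(μ)`; hence `r` can never again be optimal and may be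
permanently discarded. -/
theorem psn_pruning_criterion (y : ℕ → ℝ) (γ : ℝ → ℝ → ℝ) (F : ℕ → ℝ)
    (r s : ℕ) (hr : 1 ≤ r) (hrs : r < s)
    (h : ∀ μ : ℝ, psnGmin y γ F s μ < psnG y γ F s r μ) :
    ∀ t : ℕ, s < t → ∀ μ : ℝ, psnGmin y γ F t μ < psnG y γ F t r μ :=
  psn_pruning_criterion_general y γ F r s hrs h
end

section
/- Boundary characterization of the generalized lasso dual solution: suppose ν̂ minimizes the function ν ↦ (1/2)‖y − Dᵀν‖₂² over the box { ν ∈ ℝᵐ : ‖ν‖_∞ ≤ λ }, and set μ̂ = y − Dᵀν̂. Then for every index i ∈ {1, …, m}: if (Dμ̂)_i > 0 then ν̂_i = λ, and if (Dμ̂)_i < 0 then ν̂_i = −λ. -/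
/-!
Moving the single coordinate `ν̂ᵢ` by `t` changes `‖y − Dᵀν‖₂²` by `−2t (Dμ̂)ᵢ + t² ‖Dᵢ‖₂²`,
where `Dᵢ` is the `i`-th row of `D`. If `(Dμ̂)ᵢ > 0` and `ν̂ᵢ < λ`, a small step `t > 0` stays in
the box and makes the linear term win, contradicting minimality; `(Dμ̂)ᵢ < 0` is symmetric.
-/

open Finset Matrix

theorem nonpos_of_forall_mul_le_sq {a C s : ℝ} (hs : 0 < s)
    (h : ∀ t, 0 < t → t ≤ s → t * a ≤ t ^ 2 * C) : a ≤ 0 := by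
  by_contra! ha
  have hC : 0 < |C| + 1 := by positivity
  set t := min s (a / (|C| + 1))
  have ht : 0 < t := lt_min hs (div_pos ha hC)
  have hta : t * (|C| + 1) ≤ a := (le_div_iff₀ hC).mp (min_le_right _ _)
  have hle : a ≤ t * C := le_of_mul_le_mul_left (by nlinarith [h t ht (min_le_left _ _)]) ht
  nlinarith [le_abs_self C]

theorem sum_sub_mul_sq {ι : Type*} [Fintype ι] (r d : ι → ℝ) (t : ℝ) :
    ∑ j, (r j - t * d j) ^ 2 = ∑ j, r j ^ 2 - 2 * t * (r ⬝ᵥ d) + t ^ 2 * ∑ j, d j ^ 2 := by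
  simp only [sub_sq, mul_pow, sum_add_distrib, sum_sub_distrib, dotProduct, mul_sum]
  congr 2
  exact sum_congr rfl fun j _ => by ring

namespace Matrix

theorem transpose_mulVec_add_single {ι κ : Type*} [Fintype κ] [DecidableEq κ]
    (D : Matrix κ ι ℝ) (ν : κ → ℝ) (i : κ) (t : ℝ) :
    Dᵀ *ᵥ (ν + Pi.single i t) = Dᵀ *ᵥ ν + t • D i := by
  rw [mulVec_add, mulVec_transpose (x := Pi.single i t), single_vecMul]
  rfl

theorem two_mul_mulVec_sub_le_of_isMinOn {ι κ : Type*} [Fintype ι] [Fintype κ] [DecidableEq κ]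
    {S : Set (κ → ℝ)} {y : ι → ℝ} {D : Matrix κ ι ℝ}
    {νhat : κ → ℝ} (hmin : IsMinOn (fun ν => ∑ j, (y j - (Dᵀ *ᵥ ν) j) ^ 2) S νhat)
    {i : κ} {t : ℝ} (ht : νhat + Pi.single i t ∈ S) :
    2 * t * (D *ᵥ (y - Dᵀ *ᵥ νhat)) i ≤ t ^ 2 * ∑ j, D i j ^ 2 := by
  have h := isMinOn_iff.mp hmin _ ht
  simp only [transpose_mulVec_add_single, Pi.add_apply, Pi.smul_apply, smul_eq_mul,
    ← sub_sub] at h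
  rw [sum_sub_mul_sq] at h
  have hg : (D *ᵥ (y - Dᵀ *ᵥ νhat)) i = (fun j => y j - (Dᵀ *ᵥ νhat) j) ⬝ᵥ D i :=
    dotProduct_comm _ _
  rw [hg]
  linarith

end Matrix

theorem abs_add_single_le {κ : Type*} [DecidableEq κ] {ν : κ → ℝ} {lam t : ℝ} {i : κ}
    (hν : ∀ k, |ν k| ≤ lam) (ht : |ν i + t| ≤ lam) (k : κ) :
    |(ν + Pi.single i t : κ → ℝ) k| ≤ lam := by
  rcases eq_or_ne k i with rfl | hk
  · simpa using ht
  · simpa [hk] using hν k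

theorem genlasso_dual_boundary_general (n m : ℕ)
    (y : Fin n → ℝ) (D : Matrix (Fin m) (Fin n) ℝ) (lam : ℝ)
    (νhat : Fin m → ℝ) (hfeas : ∀ i, |νhat i| ≤ lam)
    (hmin : ∀ ν : Fin m → ℝ, (∀ i, |ν i| ≤ lam) →
      (1 / 2) * (∑ j, (y j - D.transpose.mulVec νhat j) ^ 2) ≤
        (1 / 2) * (∑ j, (y j - D.transpose.mulVec ν j) ^ 2)) :
    ∀ i : Fin m,
      (0 < D.mulVec (fun j => y j - D.transpose.mulVec νhat j) i → νhat i = lam) ∧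
      (D.mulVec (fun j => y j - D.transpose.mulVec νhat j) i < 0 → νhat i = -lam) := by
  intro i
  have hmin' : IsMinOn (fun ν => ∑ j, (y j - (Dᵀ *ᵥ ν) j) ^ 2) {ν | ∀ k, |ν k| ≤ lam} νhat :=
    isMinOn_iff.mpr fun ν hν => by linarith [hmin ν hν]
  set g := (D *ᵥ (y - Dᵀ *ᵥ νhat)) i
  set C := ∑ j, D i j ^ 2
  have key (t : ℝ) (ht : |νhat i + t| ≤ lam) : 2 * t * g ≤ t ^ 2 * C :=
    two_mul_mulVec_sub_le_of_isMinOn hmin' (abs_add_single_le hfeas ht)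
  obtain ⟨hlo, hhi⟩ := abs_le.mp (hfeas i)
  constructor
  · intro (hpos : 0 < g)
    by_contra hne
    have hlt : νhat i < lam := lt_of_le_of_ne hhi hne
    have : 2 * g ≤ 0 := nonpos_of_forall_mul_le_sq (C := C) (sub_pos.mpr hlt) fun t _ _ => by
      linarith [key t (abs_le.mpr ⟨by linarith, by linarith⟩)]
    linarith
  · intro (hneg : g < 0)
    by_contra hne
    have hlt : -lam < νhat i := lt_of_le_of_ne hlo (Ne.symm hne)
    have : -2 * g ≤ 0 := nonpos_of_forall_mul_le_sq (C := C) (neg_lt_iff_pos_add.mp hlt)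
      fun t _ _ => by linarith [neg_sq t ▸ key (-t) (abs_le.mpr ⟨by linarith, by linarith⟩)]
    linarith

/-- Boundary characterization of the generalized lasso dual solution: if `ν̂`
minimizes `(1/2)‖y − Dᵀν‖₂²` over the box `{ ν : ‖ν‖_∞ ≤ λ }` and
`μ̂ = y − Dᵀν̂`, then for each coordinate `i`: `(Dμ̂)_i > 0` forces `ν̂_i = λ`,
and `(Dμ̂)_i < 0` forces `ν̂_i = −λ`. -/
theorem genlasso_dual_boundary (n m : ℕ) (hn : 1 ≤ n) (hm : 1 ≤ m)
    (y : Fin n → ℝ) (D : Matrix (Fin m) (Fin n) ℝ) (lam : ℝ) (hlam : 0 < lam)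
    (νhat : Fin m → ℝ) (hfeas : ∀ i, |νhat i| ≤ lam)
    (hmin : ∀ ν : Fin m → ℝ, (∀ i, |ν i| ≤ lam) →
      (1 / 2) * (∑ j, (y j - D.transpose.mulVec νhat j) ^ 2) ≤
        (1 / 2) * (∑ j, (y j - D.transpose.mulVec ν j) ^ 2)) :
    ∀ i : Fin m,
      (0 < D.mulVec (fun j => y j - D.transpose.mulVec νhat j) i → νhat i = lam) ∧
      (D.mulVec (fun j => y j - D.transpose.mulVec νhat j) i < 0 → νhat i = -lam) :=
  genlasso_dual_boundary_general n m y D lam νhat hfeas hmin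
end
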